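/- For k ≥ 3, one has ∑_{l=1}^N r_{2,k}(l)² = O(N^{2/k + ε}) for every ε > 0; equivalently, the number of quadruples (x₁,x₂,y₁,y₂) of positive integers ≤ X with x₁^k + x₂^k = y₁^k + y₂^k is O(X^{2+ε}). -/

import Mathlib

open scoped BigOperators

/-- `r_{s,k}(l)`: the number of ordered `s`-tuples of positive integers whose `k`-th powers
sum to `l`. -/
noncomputable def numRep (s k l : ℕ) : ℕ :=
  Nat.card {v : Fin s → ℕ // (∀ i, 1 ≤ v i) ∧ ∑ i, (v i) ^ k = l}

open Finset Real

/-!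
Writing `x₁^k + x₂^k = y₁^k + y₂^k` as `x₁^k - y₁^k = y₂^k - x₂^k`, the sum `∑_{l ≤ N} r_{2,k}(l)²`
is at most the number of pairs of points `(x, y)` of `[1, X]²`, `X = ⌊N^{1/k}⌋`, at which
`x^k - y^k` takes the same value. The value `0` is taken only on the diagonal, which gives `X²`
pairs. A value `m ≠ 0` has `|m| ≤ N` and is taken at most `d(|m|)` times: `x - y` divides
`x^k - y^k`, and for `k ≥ 2` the point is determined by `x - y` and `m`, since
`y ↦ (y + d)^k - y^k` is strictly increasing. Hence the remaining pairs number at most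
`max_{m ≤ N} d(m) · X² = O(N^{2/k + ε})` by the divisor bound `d(m) = O(m^ε)`, which follows by
comparing `d(n) = ∏ (a_p + 1)` with `n^ε = ∏ (p^ε)^{a_p}` prime by prime: `a + 1 ≤ (p^ε)^a` as soon
as `p^ε ≥ 2`, and each of the finitely many smaller primes costs a bounded factor.
-/

theorem add_one_le_mul_pow_of_one_lt {y : ℝ} (hy : 1 < y) (a : ℕ) :
    (a + 1 : ℝ) ≤ (1 + (log y)⁻¹) * y ^ a := by
  have hL : 0 < log y := log_pos hy
  have hexp : 1 + a * log y ≤ y ^ a := by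
    calc 1 + a * log y ≤ exp (a * log y) := by linarith [add_one_le_exp (a * log y)]
      _ = y ^ a := by rw [exp_nat_mul, exp_log (by linarith)]
  calc (a + 1 : ℝ) ≤ (1 + (log y)⁻¹) * (1 + a * log y) := by
        field_simp
        nlinarith [mul_nonneg (Nat.cast_nonneg a : (0:ℝ) ≤ a) (sq_nonneg (log y))]
    _ ≤ (1 + (log y)⁻¹) * y ^ a := by gcongr

theorem add_one_le_pow_of_two_le {y : ℝ} (hy : 2 ≤ y) (a : ℕ) : (a + 1 : ℝ) ≤ y ^ a := by
  calc (a + 1 : ℝ) ≤ 1 + a * (y - 1) := by nlinarith [(Nat.cast_nonneg a : (0:ℝ) ≤ a)]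
    _ ≤ (1 + (y - 1)) ^ a := one_add_mul_le_pow (by linarith) a
    _ = y ^ a := by ring

section DivisorBound

variable {ε : ℝ} {P : ℕ}

theorem add_one_le_mul_rpow_pow (hε : 0 < ε) (hP : ∀ p ≥ P, 2 ≤ (p : ℝ) ^ ε) {p : ℕ}
    (hp : 2 ≤ p) (a : ℕ) :
    (a + 1 : ℝ) ≤ (if p < P then 1 + (ε * log 2)⁻¹ else 1) * ((p : ℝ) ^ ε) ^ a := by
  split_ifs with hpP
  · have hp2 : (2 : ℝ) ≤ p := by exact_mod_cast hp
    have hlog : ε * log 2 ≤ log ((p : ℝ) ^ ε) := by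
      rw [log_rpow (by linarith)]
      gcongr
    have hlog2 : 0 < ε * log 2 := mul_pos hε (log_pos one_lt_two)
    calc (a + 1 : ℝ) ≤ (1 + (log ((p : ℝ) ^ ε))⁻¹) * ((p : ℝ) ^ ε) ^ a :=
          add_one_le_mul_pow_of_one_lt (one_lt_rpow (by linarith) hε) a
      _ ≤ (1 + (ε * log 2)⁻¹) * ((p : ℝ) ^ ε) ^ a := by gcongr
  · rw [one_mul]
    exact add_one_le_pow_of_two_le (hP p (not_lt.mp hpP)) a

theorem rpow_eq_prod_primeFactors {n : ℕ} (hn : n ≠ 0) (ε : ℝ) :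
    (n : ℝ) ^ ε = ∏ p ∈ n.primeFactors, ((p : ℝ) ^ ε) ^ n.factorization p := by
  conv_lhs => rw [← Nat.prod_factorization_pow_eq_self hn]
  rw [Nat.prod_factorization_eq_prod_primeFactors, Nat.cast_prod,
    ← finsetProd_rpow _ _ fun p _ => by positivity]
  refine prod_congr rfl fun p _ => ?_
  rw [Nat.cast_pow, ← rpow_natCast, ← rpow_natCast, ← rpow_mul (by positivity),
    ← rpow_mul (by positivity), mul_comm]

theorem card_divisors_le_mul_rpow (hε : 0 < ε) (hP : ∀ p ≥ P, 2 ≤ (p : ℝ) ^ ε) (n : ℕ) :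
    (#n.divisors : ℝ) ≤ (1 + (ε * log 2)⁻¹) ^ P * (n : ℝ) ^ ε := by
  rcases eq_or_ne n 0 with rfl | hn
  · simp [zero_rpow hε.ne']
  have hB : 1 ≤ 1 + (ε * log 2)⁻¹ :=
    le_add_of_nonneg_right (inv_nonneg.2 (mul_pos hε (log_pos one_lt_two)).le)
  calc (#n.divisors : ℝ) = ∏ p ∈ n.primeFactors, (n.factorization p + 1 : ℝ) := by
        rw [Nat.card_divisors hn]; push_cast; rfl
    _ ≤ ∏ p ∈ n.primeFactors,
          (if p < P then 1 + (ε * log 2)⁻¹ else 1) * ((p : ℝ) ^ ε) ^ n.factorization p :=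
        prod_le_prod (fun _ _ => by positivity) fun p hp =>
          add_one_le_mul_rpow_pow hε hP (Nat.prime_of_mem_primeFactors hp).two_le _
    _ = (1 + (ε * log 2)⁻¹) ^ #{p ∈ n.primeFactors | p < P} * (n : ℝ) ^ ε := by
        rw [prod_mul_distrib, ← prod_filter, prod_const, rpow_eq_prod_primeFactors hn]
    _ ≤ (1 + (ε * log 2)⁻¹) ^ P * (n : ℝ) ^ ε := by
        gcongr
        exact (card_le_card fun p hp => mem_range.2 (mem_filter.1 hp).2).trans_eq (card_range P)

end DivisorBound

theorem exists_card_divisors_le_mul_rpow {ε : ℝ} (hε : 0 < ε) :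
    ∃ C > 0, ∀ n : ℕ, (#n.divisors : ℝ) ≤ C * (n : ℝ) ^ ε := by
  obtain ⟨P, hP⟩ := Filter.eventually_atTop.1 <|
    ((tendsto_rpow_atTop hε).comp tendsto_natCast_atTop_atTop).eventually_ge_atTop 2
  have : 0 < ε * log 2 := mul_pos hε (log_pos one_lt_two)
  exact ⟨_, by positivity, card_divisors_le_mul_rpow hε hP⟩

section Collisions

variable {α β : Type*} [DecidableEq β]

def collisions (s : Finset α) (f : α → β) : Finset (α × α) :=
  {p ∈ s ×ˢ s | f p.1 = f p.2}

theorem card_collisions (s : Finset α) (f : α → β) :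
    #(collisions s f) = ∑ a ∈ s, #{b ∈ s | f b = f a} := by
  rw [collisions, card_filter, sum_product]
  refine sum_congr rfl fun a _ => ?_
  rw [card_filter]
  simp only [eq_comm]

theorem sum_sq_card_fiber_le_card_collisions (s : Finset α) (f : α → β) (t : Finset β) :
    ∑ b ∈ t, #{a ∈ s | f a = b} ^ 2 ≤ #(collisions s f) := by
  calc ∑ b ∈ t, #{a ∈ s | f a = b} ^ 2
      = ∑ b ∈ t, ∑ a ∈ s with f a = b, #{a' ∈ s | f a' = f a} := by
        refine sum_congr rfl fun b _ => ?_
        rw [sq, ← smul_eq_mul, ← sum_const]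
        exact sum_congr rfl fun a ha => by rw [(mem_filter.1 ha).2]
    _ = ∑ a ∈ s with f a ∈ t, #{a' ∈ s | f a' = f a} := sum_fiberwise_eq_sum_filter _ _ _ _
    _ ≤ #(collisions s f) := by
        rw [card_collisions]
        exact sum_le_sum_of_subset (filter_subset _ _)

theorem card_collisions_le (s : Finset α) (f : α → β) (b₀ : β) {M : ℕ}
    (hM : ∀ b ≠ b₀, #{a ∈ s | f a = b} ≤ M) :
    #(collisions s f) ≤ #{a ∈ s | f a = b₀} ^ 2 + M * #s := by
  rw [card_collisions, ← sum_filter_add_sum_filter_not s (f · = b₀)]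
  gcongr
  · rw [sq, ← smul_eq_mul, ← sum_const]
    exact (sum_congr rfl fun a ha => by rw [(mem_filter.1 ha).2]).le
  · rw [mul_comm, ← smul_eq_mul, ← sum_const]
    exact (sum_le_sum fun a ha => hM _ (mem_filter.1 ha).2).trans
      (sum_le_sum_of_subset (filter_subset _ _))

theorem card_collisions_add_eq_card_collisions_sub (s : Finset α) (φ : α → ℕ) :
    #(collisions (s ×ˢ s) fun p => φ p.1 + φ p.2) =
      #(collisions (s ×ˢ s) fun p => (φ p.1 : ℤ) - φ p.2) := by
  refine card_nbij' (fun q => ((q.1.1, q.2.1), (q.2.2, q.1.2)))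
    (fun q => ((q.1.1, q.2.2), (q.1.2, q.2.1))) ?_ ?_ (fun _ _ => rfl) (fun _ _ => rfl)
  all_goals
    intro q hq
    simp only [collisions, coe_filter, mem_product, Set.mem_ofPred_eq] at hq ⊢
    exact ⟨by tauto, by omega⟩

end Collisions

theorem add_pow_sub_pow_strictMono {k d : ℕ} (hk : 2 ≤ k) (hd : 0 < d) :
    StrictMono fun y : ℕ => (y + d) ^ k - y ^ k := by
  have hfactor : ∀ y : ℕ,
      (y + d) ^ k - y ^ k = (∑ i ∈ range k, (d + y) ^ i * y ^ (k - 1 - i)) * d := fun y => by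
    rw [add_comm y d, ← geom_sum₂_mul_add d y k, Nat.add_sub_cancel]
  intro y y' hy
  simp only [hfactor]
  refine Nat.mul_lt_mul_of_pos_right (sum_lt_sum (fun i _ => by gcongr) ?_) hd
  exact ⟨0, mem_range.2 (by omega), by simpa using Nat.pow_lt_pow_left hy (by omega)⟩

theorem eq_of_natAbs_sub_eq_of_pow_sub_pow_eq {k x y x' y' : ℕ} (hk : 2 ≤ k) (hxy : x ≠ y)
    (hd : ((x : ℤ) - y).natAbs = ((x' : ℤ) - y').natAbs)
    (h : (x : ℤ) ^ k - y ^ k = x' ^ k - y' ^ k) : x = x' ∧ y = y' := by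
  wlog hlt : y < x generalizing x y x' y'
  · have := this (x := y) (y := x) (x' := y') (y' := x') hxy.symm
      (by rw [← Int.natAbs_neg, neg_sub, hd, ← Int.natAbs_neg, neg_sub]) (by linarith) (by omega)
    exact this.symm
  have hpow : y ^ k < x ^ k := Nat.pow_lt_pow_left hlt (by omega)
  have hlt' : y' < x' := by
    refine lt_of_pow_lt_pow_left₀ k (Nat.zero_le _) ?_
    zify at hpow ⊢
    linarith
  obtain ⟨d, rfl⟩ : ∃ d, x = y + d := ⟨x - y, by omega⟩
  obtain rfl : x' = y' + d := by omega
  have hyy : y = y' := (add_pow_sub_pow_strictMono (d := d) hk (by omega)).injective <| by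
    zify [Nat.pow_le_pow_left (Nat.le_add_right y d) k,
      Nat.pow_le_pow_left (Nat.le_add_right y' d) k]
    exact h
  exact ⟨by rw [hyy], hyy⟩

theorem card_filter_pow_sub_pow_eq_le_card_divisors {k : ℕ} (hk : 2 ≤ k) (s : Finset (ℕ × ℕ))
    {m : ℤ} (hm : m ≠ 0) :
    #{p ∈ s | (p.1 : ℤ) ^ k - p.2 ^ k = m} ≤ #m.natAbs.divisors := by
  refine card_le_card_of_injOn (fun p => ((p.1 : ℤ) - p.2).natAbs) (fun p hp => ?_) ?_
  · have hpm := (mem_filter.1 hp).2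
    refine Nat.mem_divisors.2 ⟨Int.natAbs_dvd_natAbs.2 ?_, Int.natAbs_ne_zero.2 hm⟩
    exact hpm ▸ sub_dvd_pow_sub_pow _ _ k
  · intro p hp p' hp' hpp'
    have hpm := (mem_filter.1 hp).2
    have hp'm := (mem_filter.1 hp').2
    have hne : p.1 ≠ p.2 := fun h => hm (by rw [← hpm, h, sub_self])
    obtain ⟨h1, h2⟩ := eq_of_natAbs_sub_eq_of_pow_sub_pow_eq hk hne hpp' (hpm.trans hp'm.symm)
    exact Prod.ext h1 h2

theorem card_filter_pow_sub_pow_eq_zero_le {k : ℕ} (hk : k ≠ 0) (s : Finset ℕ) :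
    #{p ∈ s ×ˢ s | (p.1 : ℤ) ^ k - p.2 ^ k = 0} ≤ #s := by
  refine card_le_card_of_injOn Prod.fst (fun p hp => (mem_product.1 (mem_filter.1 hp).1).1) ?_
  intro p hp p' hp' h
  have hdiag : ∀ q ∈ {p ∈ s ×ˢ s | (p.1 : ℤ) ^ k - p.2 ^ k = 0}, q.2 = q.1 := fun q hq =>
    Nat.pow_left_injective hk <| by exact_mod_cast (sub_eq_zero.1 (mem_filter.1 hq).2).symm
  exact Prod.ext h (by rw [hdiag p hp, hdiag p' hp', h])

theorem card_collisions_pow_sub_pow_le {k X N M : ℕ} (hk : 2 ≤ k) (hX : X ^ k ≤ N)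
    (hM : ∀ m ∈ Icc 1 N, #m.divisors ≤ M) :
    #(collisions (Icc 1 X ×ˢ Icc 1 X) fun p => (p.1 : ℤ) ^ k - p.2 ^ k) ≤ X ^ 2 + M * X ^ 2 := by
  have hfiber : ∀ m ≠ (0 : ℤ),
      #{p ∈ Icc 1 X ×ˢ Icc 1 X | (p.1 : ℤ) ^ k - p.2 ^ k = m} ≤ M := by
    intro m hm
    rcases eq_or_ne {p ∈ Icc 1 X ×ˢ Icc 1 X | (p.1 : ℤ) ^ k - p.2 ^ k = m} ∅ with h | h
    · simp [h]
    obtain ⟨p, hp⟩ := nonempty_iff_ne_empty.2 h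
    simp only [mem_filter, mem_product, mem_Icc] at hp
    have hmN : m.natAbs ≤ N := by
      have h1 : p.1 ^ k ≤ N := (Nat.pow_le_pow_left hp.1.1.2 k).trans hX
      have h2 : p.2 ^ k ≤ N := (Nat.pow_le_pow_left hp.1.2.2 k).trans hX
      rw [← hp.2, ← Nat.cast_pow, ← Nat.cast_pow]
      omega
    exact (card_filter_pow_sub_pow_eq_le_card_divisors hk _ hm).trans
      (hM _ (mem_Icc.2 ⟨Int.natAbs_pos.2 hm, hmN⟩))
  have hdiag := card_filter_pow_sub_pow_eq_zero_le (k := k) (by omega) (Icc 1 X)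
  rw [Nat.card_Icc, Nat.add_sub_cancel] at hdiag
  refine (card_collisions_le _ _ 0 hfiber).trans ?_
  rw [card_product, Nat.card_Icc, Nat.add_sub_cancel, ← sq]
  gcongr

theorem numRep_two_eq_card {k l N : ℕ} (hk : k ≠ 0) (hl : l ≤ N) :
    numRep 2 k l = #{p ∈ Icc 1 (Nat.nthRoot k N) ×ˢ Icc 1 (Nat.nthRoot k N) |
      p.1 ^ k + p.2 ^ k = l} := by
  rw [numRep, ← Nat.card_eq_finsetCard]
  refine Nat.card_congr ((finTwoArrowEquiv ℕ).subtypeEquiv fun v => ?_)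
  simp only [finTwoArrowEquiv_apply, Equiv.toFun_as_coe, piFinTwoEquiv_apply, Fin.forall_fin_two,
    Fin.sum_univ_two, mem_filter, mem_product, mem_Icc, Nat.le_nthRoot_iff hk]
  constructor
  · rintro ⟨⟨h0, h1⟩, hsum⟩
    exact ⟨⟨⟨h0, by omega⟩, h1, by omega⟩, hsum⟩
  · rintro ⟨⟨⟨h0, -⟩, h1, -⟩, hsum⟩
    exact ⟨⟨h0, h1⟩, hsum⟩

theorem nthRoot_pow_le_rpow {k : ℕ} (hk : k ≠ 0) (N j : ℕ) :
    (Nat.nthRoot k N : ℝ) ^ j ≤ (N : ℝ) ^ ((j : ℝ) / k) := by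
  have hroot : (Nat.nthRoot k N : ℝ) ≤ (N : ℝ) ^ (k : ℝ)⁻¹ := by
    rw [le_rpow_inv_iff_of_pos (by positivity) (by positivity) (by positivity)]
    exact_mod_cast Nat.pow_nthRoot_le_iff.2 (Or.inl hk)
  calc (Nat.nthRoot k N : ℝ) ^ j ≤ ((N : ℝ) ^ (k : ℝ)⁻¹) ^ j := by gcongr
    _ = (N : ℝ) ^ ((j : ℝ) / k) := by
        rw [← rpow_natCast, ← rpow_mul (by positivity), inv_mul_eq_div]

theorem sum_sq_numRep_two_le {k N M : ℕ} (hk : 2 ≤ k) (hM : ∀ m ∈ Icc 1 N, #m.divisors ≤ M) :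
    ∑ l ∈ Icc 1 N, numRep 2 k l ^ 2 ≤ Nat.nthRoot k N ^ 2 + M * Nat.nthRoot k N ^ 2 := by
  set X := Nat.nthRoot k N
  calc ∑ l ∈ Icc 1 N, numRep 2 k l ^ 2
      = ∑ l ∈ Icc 1 N, #{p ∈ Icc 1 X ×ˢ Icc 1 X | p.1 ^ k + p.2 ^ k = l} ^ 2 :=
        sum_congr rfl fun l hl => by rw [numRep_two_eq_card (by omega) (mem_Icc.1 hl).2]
    _ ≤ #(collisions (Icc 1 X ×ˢ Icc 1 X) fun p => p.1 ^ k + p.2 ^ k) :=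
        sum_sq_card_fiber_le_card_collisions _ _ _
    _ = #(collisions (Icc 1 X ×ˢ Icc 1 X) fun p => (p.1 : ℤ) ^ k - p.2 ^ k) := by
        rw [card_collisions_add_eq_card_collisions_sub _ (· ^ k)]
        push_cast
        rfl
    _ ≤ X ^ 2 + M * X ^ 2 :=
        card_collisions_pow_sub_pow_le hk (Nat.pow_nthRoot_le_iff.2 (Or.inl (by omega))) hM

/-- For `k ≥ 3`, `∑_{l=1}^N r_{2,k}(l)² = O(N^{2/k+ε})` for every `ε > 0`. -/
theorem stmt14 (k : ℕ) (hk : 3 ≤ k) :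
    ∀ ε : ℝ, 0 < ε → ∃ C > 0, ∀ N : ℕ, 1 ≤ N →
      ∑ l ∈ Finset.Icc 1 N, (numRep 2 k l : ℝ) ^ 2 ≤ C * (N : ℝ) ^ ((2 : ℝ) / k + ε) := by
  intro ε hε
  obtain ⟨C, hC0, hC⟩ := exists_card_divisors_le_mul_rpow hε
  refine ⟨1 + C, by positivity, fun N hN => ?_⟩
  set X := Nat.nthRoot k N
  have hX : (X : ℝ) ^ 2 ≤ (N : ℝ) ^ ((2 : ℝ) / k) := by
    exact_mod_cast nthRoot_pow_le_rpow (by omega) N 2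
  obtain ⟨M, hMdiv, hM⟩ :
      ∃ M : ℕ, (∀ m ∈ Icc 1 N, #m.divisors ≤ M) ∧ (M : ℝ) ≤ C * (N : ℝ) ^ ε := by
    obtain ⟨m, hm, hmM⟩ := exists_mem_eq_sup _ (nonempty_Icc.2 hN) fun m : ℕ => #m.divisors
    refine ⟨_, fun m' hm' => le_sup (f := fun m : ℕ => #m.divisors) hm', ?_⟩
    rw [hmM]
    exact (hC m).trans (by gcongr; exact (mem_Icc.1 hm).2)
  have hNε : 1 ≤ (N : ℝ) ^ ε := one_le_rpow (by exact_mod_cast hN) hε.le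
  calc ∑ l ∈ Icc 1 N, (numRep 2 k l : ℝ) ^ 2 ≤ (X : ℝ) ^ 2 + M * X ^ 2 := by
        exact_mod_cast sum_sq_numRep_two_le (by omega) hMdiv
    _ ≤ (N : ℝ) ^ ((2 : ℝ) / k) * (N : ℝ) ^ ε + C * (N : ℝ) ^ ε * (N : ℝ) ^ ((2 : ℝ) / k) := by
        gcongr
        calc (X : ℝ) ^ 2 = (X : ℝ) ^ 2 * 1 := (mul_one _).symm
          _ ≤ (N : ℝ) ^ ((2 : ℝ) / k) * (N : ℝ) ^ ε := by gcongr
    _ = (1 + C) * (N : ℝ) ^ ((2 : ℝ) / k + ε) := by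
        rw [rpow_add (by positivity)]; ring
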